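/- Let J be a strongly stable monomial ideal. Let ℤ[C] be the polynomial ring over ℤ in the indeterminates C_{αβ} (for x^α ∈ B_J, x^β ∈ N(J)_{|α|}), let 𝓕_J = { x^α − Σ_{x^β ∈ N(J)_{|α|}} C_{αβ} x^β : x^α ∈ B_J } be the generic J-marked set in ℤ[C][x₀,…,xₙ], 𝓘 = (𝓕_J), and let 𝔦_J ⊆ ℤ[C] be the ideal generated by the x-coefficients of all polynomials in 𝓘 ∩ ⟨N(J)⟩. Then for every commutative noetherian ring A, a J-marked set F_J in A[x] with coefficients c_{αβ} is a J-marked basis if and only if the evaluation homomorphism φ_{F_J}: ℤ[C] → A, C_{αβ} ↦ c_{αβ}, satisfies 𝔦_J ⊆ ker φ_{F_J} (i.e., φ_{F_J} factors through ℤ[C]/𝔦_J). -/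

import Mathlib

open MvPolynomial

noncomputable section

/-- Exponent vectors of monomials in the variables `x₀, …, xₙ`. -/
abbrev Mon (n : ℕ) : Type := Fin (n + 1) →₀ ℕ

namespace MarkedFamilies

variable {n : ℕ}

/-- The total degree of a monomial given by its exponent vector. -/
def mdeg (α : Mon n) : ℕ := α.sum fun _ e => e

/-- A monomial ideal, identified with its (upward closed) set of monomials. -/
def IsMonomialIdeal (J : Set (Mon n)) : Prop := ∀ α ∈ J, ∀ δ : Mon n, α + δ ∈ J

/-- A strongly stable monomial ideal: a monomial ideal such that for every monomial
`x^α ∈ J`, every variable `x_j` dividing `x^α` and every `i > j`, `(x_i/x_j)·x^α ∈ J`. -/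
def IsStronglyStable (J : Set (Mon n)) : Prop :=
  IsMonomialIdeal J ∧
    ∀ α ∈ J, ∀ j : Fin (n + 1), α j ≠ 0 → ∀ i : Fin (n + 1), j < i →
      α - Finsupp.single j 1 + Finsupp.single i 1 ∈ J

/-- The minimal monomial generators `B_J` of a monomial ideal `J`. -/
def minGens (J : Set (Mon n)) : Set (Mon n) :=
  {α | α ∈ J ∧ ∀ j : Fin (n + 1), α j ≠ 0 → α - Finsupp.single j 1 ∉ J}

/-- `min x^γ ≥ max x^δ`: every variable dividing `x^γ` is at least every variable
dividing `x^δ` (vacuously true when either monomial is `1`). -/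
def minGeMax (γ δ : Mon n) : Prop := ∀ i ∈ γ.support, ∀ j ∈ δ.support, j ≤ i

/-- Lexicographic order induced by `x₀ < ⋯ < xₙ`: `a <ₗₑₓ b` iff at the largest
index where they differ, `a` has the smaller exponent. -/
def lexLt (a b : Mon n) : Prop :=
  ∃ i : Fin (n + 1), a i < b i ∧ ∀ j : Fin (n + 1), i < j → a j = b j

/-- A saturated strongly stable ideal: strongly stable and no minimal generator is
divisible by `x₀`. -/
def IsSaturatedSS (J : Set (Mon n)) : Prop :=
  IsStronglyStable J ∧ ∀ α ∈ minGens J, α 0 = 0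

/-- The truncation `J_{≥ t}`: the (monomial) ideal generated by the monomials of `J`
of degree at least `t`. -/
def truncSet (J : Set (Mon n)) (t : ℕ) : Set (Mon n) := {α | α ∈ J ∧ t ≤ mdeg α}

section Ring

variable (A : Type*) [CommRing A]

/-- `⟨N(J)⟩`: the `A`-span of the monomials not in `J`. -/
def nSpan (J : Set (Mon n)) : Submodule A (MvPolynomial (Fin (n + 1)) A) :=
  Submodule.span A {p | ∃ β : Mon n, β ∉ J ∧ p = monomial β (1 : A)}

/-- `⟨N(J)_s⟩`: the `A`-span of the monomials of degree `s` not in `J`. -/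
def nSpanDeg (J : Set (Mon n)) (s : ℕ) : Submodule A (MvPolynomial (Fin (n + 1)) A) :=
  Submodule.span A {p | ∃ β : Mon n, β ∉ J ∧ mdeg β = s ∧ p = monomial β (1 : A)}

/-- `I_s`: the degree-`s` homogeneous component of an ideal, as an `A`-submodule. -/
def idealDeg (I : Ideal (MvPolynomial (Fin (n + 1)) A)) (s : ℕ) :
    Submodule A (MvPolynomial (Fin (n + 1)) A) :=
  Submodule.restrictScalars A I ⊓ homogeneousSubmodule (Fin (n + 1)) A s

/-- `I_{≥ s}`: the ideal `⊕_{t ≥ s} I_t`, i.e. the ideal generated by the homogeneous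
elements of `I` of degree at least `s`. -/
def idealGeq (I : Ideal (MvPolynomial (Fin (n + 1)) A)) (s : ℕ) :
    Ideal (MvPolynomial (Fin (n + 1)) A) :=
  Ideal.span {f | f ∈ I ∧ ∃ t : ℕ, s ≤ t ∧ f.IsHomogeneous t}

/-- A homogeneous ideal of the polynomial ring. -/
def IsHomogIdeal (I : Ideal (MvPolynomial (Fin (n + 1)) A)) : Prop :=
  ∀ f ∈ I, ∀ s : ℕ, homogeneousComponent s f ∈ I

variable {A}

/-- A `J`-marked set: a family assigning to each minimal generator `x^α ∈ B_J` a
polynomial `f_α = x^α − Σ_{x^β ∈ N(J)_{|α|}} c_{αβ} x^β`. -/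
def IsMarkedSet (J : Set (Mon n)) (F : Mon n → MvPolynomial (Fin (n + 1)) A) : Prop :=
  ∀ α ∈ minGens J, (F α).coeff α = 1 ∧
    ∀ β ∈ (F α).support, β ≠ α → β ∉ J ∧ mdeg β = mdeg α

/-- The ideal generated by a marked set. -/
def markedIdeal (J : Set (Mon n)) (F : Mon n → MvPolynomial (Fin (n + 1)) A) :
    Ideal (MvPolynomial (Fin (n + 1)) A) :=
  Ideal.span (F '' minGens J)

/-- A `J`-marked basis: a `J`-marked set `F` with `A[x] = (F) ⊕ ⟨N(J)⟩` as `A`-modules. -/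
def IsMarkedBasis (J : Set (Mon n)) (F : Mon n → MvPolynomial (Fin (n + 1)) A) : Prop :=
  IsMarkedSet J F ∧
    IsCompl (Submodule.restrictScalars A (markedIdeal J F)) (nSpan A J)

/-- `F_J^{(s)} = { x^δ f_α : deg(x^δ f_α) = s, min x^α ≥ max x^δ }`. -/
def FSet (J : Set (Mon n)) (F : Mon n → MvPolynomial (Fin (n + 1)) A) (s : ℕ) :
    Set (MvPolynomial (Fin (n + 1)) A) :=
  {p | ∃ α δ : Mon n, α ∈ minGens J ∧ mdeg α + mdeg δ = s ∧ minGeMax α δ ∧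
        p = monomial δ (1 : A) * F α}

/-- `F̂_J^{(s)} = { x^δ f_α : deg(x^δ f_α) = s, min x^α < max x^δ }`. -/
def FHatSet (J : Set (Mon n)) (F : Mon n → MvPolynomial (Fin (n + 1)) A) (s : ℕ) :
    Set (MvPolynomial (Fin (n + 1)) A) :=
  {p | ∃ α δ : Mon n, α ∈ minGens J ∧ mdeg α + mdeg δ = s ∧ ¬ minGeMax α δ ∧
        p = monomial δ (1 : A) * F α}

/-- `SF_J^{(s)} = { x^δ f_β − x^γ f_α : x^δ f_β ∈ F̂_J^{(s)}, x^γ f_α ∈ F_J^{(s)},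
x^δ x^β = x^γ x^α }`. -/
def SFSet (J : Set (Mon n)) (F : Mon n → MvPolynomial (Fin (n + 1)) A) (s : ℕ) :
    Set (MvPolynomial (Fin (n + 1)) A) :=
  {p | ∃ α γ β δ : Mon n, α ∈ minGens J ∧ β ∈ minGens J ∧
      mdeg β + mdeg δ = s ∧ ¬ minGeMax β δ ∧
      mdeg α + mdeg γ = s ∧ minGeMax α γ ∧
      δ + β = γ + α ∧ p = monomial δ (1 : A) * F β - monomial γ (1 : A) * F α}

/-- A `(J_s)`-marked set: one marked polynomial `f̃_γ = x^γ − Σ_{x^δ ∈ N(J)_s} d_{γδ} x^δ`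
for each monomial `x^γ` of degree `s` in `J`. -/
def IsTruncMarkedSet (J : Set (Mon n)) (s : ℕ)
    (f : Mon n → MvPolynomial (Fin (n + 1)) A) : Prop :=
  ∀ γ : Mon n, γ ∈ J → mdeg γ = s →
    (f γ).coeff γ = 1 ∧ ∀ β ∈ (f γ).support, β ≠ γ → β ∉ J ∧ mdeg β = s

end Ring

/-- Index set for the generic coefficients `C_{αβ}` (`x^α ∈ B_J`, `x^β ∈ N(J)_{|α|}`). -/
abbrev CIdx (J : Set (Mon n)) : Type :=
  {p : Mon n × Mon n // p.1 ∈ minGens J ∧ p.2 ∉ J ∧ mdeg p.2 = mdeg p.1}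

/-- The coefficient ring `ℤ[C]`. -/
abbrev ZC (J : Set (Mon n)) : Type := MvPolynomial (CIdx J) ℤ

/-- The generic `J`-marked set `𝓕_J = { x^α − Σ_{x^β ∈ N(J)_{|α|}} C_{αβ} x^β }`
in `ℤ[C][x]`, characterized through its coefficients. -/
def IsGenericMarkedSet (J : Set (Mon n))
    (𝓕 : Mon n → MvPolynomial (Fin (n + 1)) (ZC J)) : Prop :=
  ∀ α : Mon n, ∀ hα : α ∈ minGens J,
    (𝓕 α).coeff α = 1 ∧
    (∀ γ : Mon n, ∀ hγ : γ ∉ J ∧ mdeg γ = mdeg α,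
      (𝓕 α).coeff γ = - MvPolynomial.X ⟨(α, γ), hα, hγ.1, hγ.2⟩) ∧
    (∀ γ : Mon n, γ ≠ α → ¬(γ ∉ J ∧ mdeg γ = mdeg α) → (𝓕 α).coeff γ = 0)

/-- The ideal `𝔦_J ⊆ ℤ[C]` generated by the `x`-coefficients of all polynomials
in `(𝓕_J) ∩ ⟨N(J)⟩`. -/
def markedCoeffIdeal (J : Set (Mon n))
    (𝓕 : Mon n → MvPolynomial (Fin (n + 1)) (ZC J)) : Ideal (ZC J) :=
  Ideal.span {c : ZC J | ∃ p : MvPolynomial (Fin (n + 1)) (ZC J),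
    p ∈ markedIdeal J 𝓕 ∧ p ∈ nSpan (ZC J) J ∧ ∃ γ : Mon n, p.coeff γ = c}

/-- The evaluation homomorphism `φ_{F_J} : ℤ[C] → A`, `C_{αβ} ↦ c_{αβ}`, associated to a
`J`-marked set `F` with `f_α = x^α − Σ c_{αβ} x^β` (so `c_{αβ} = −(F α).coeff β`). -/
noncomputable def evalHom (J : Set (Mon n)) {A : Type*} [CommRing A]
    (F : Mon n → MvPolynomial (Fin (n + 1)) A) : ZC J →+* A :=
  MvPolynomial.eval₂Hom (Int.castRingHom A) fun p => -((F p.val.1).coeff p.val.2)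

/-- `x^γ` is the `σ`-leading monomial of `g` (with nonzero leading coefficient). -/
def IsLeadingMon {A : Type*} [CommRing A] (σlt : Mon n → Mon n → Prop)
    (g : MvPolynomial (Fin (n + 1)) A) (γ : Mon n) : Prop :=
  g.coeff γ ≠ 0 ∧ ∀ δ ∈ g.support, δ ≠ γ → σlt δ γ

/-- `LC(I, x^γ)`: the set of leading coefficients at `x^γ` of elements of `I`,
together with `0`. -/
def LCset {A : Type*} [CommRing A] (σlt : Mon n → Mon n → Prop)
    (I : Ideal (MvPolynomial (Fin (n + 1)) A)) (γ : Mon n) : Set A :=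
  {a | ∃ g ∈ I, IsLeadingMon σlt g γ ∧ g.coeff γ = a} ∪ {0}

/-- A monic ideal with respect to the term ordering `σ`. -/
def IsMonicIdeal {A : Type*} [CommRing A] (σlt : Mon n → Mon n → Prop)
    (I : Ideal (MvPolynomial (Fin (n + 1)) A)) : Prop :=
  ∀ γ : Mon n, LCset σlt I γ = {0} ∨ LCset σlt I γ = Set.univ

/-- The set of `σ`-leading monomials of elements of `I` (i.e. `in_σ(I)`,
identified with its set of monomials). -/
def leadingMons {A : Type*} [CommRing A] (σlt : Mon n → Mon n → Prop)
    (I : Ideal (MvPolynomial (Fin (n + 1)) A)) : Set (Mon n) :=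
  {γ | ∃ g ∈ I, IsLeadingMon σlt g γ}

end MarkedFamilies
end

/-!
Every monomial `x^η ∈ J` factors as `x^α · x^δ` with `x^α ∈ B_J` and `min x^α ≥ max x^δ`
(Eliahou–Kervaire). For any `J`-marked set `F` over any ring, the multiples `x^δ f_α` are
triangular with respect to `⟨N(J)⟩`: besides `x^η` itself, the monomials of `x^δ f_α` lying
in `J` have a colex-smaller multiplier in their own factorization. Hence their span `⟨F_J⟩`
is a complement of `⟨N(J)⟩` contained in `(F_J)`, and `F_J` is a marked basis iff
`(F_J) ∩ ⟨N(J)⟩ = 0`, i.e. iff `(F_J) ⊆ ⟨F_J⟩`.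

Over `ℤ[C]`, write `x^γ 𝓕_α = v + r` with `v ∈ ⟨𝓕_J⟩` and `r ∈ (𝓕_J) ∩ ⟨N(J)⟩`. If `φ_F`
kills `𝔦_J` it kills `r`, so `x^γ f_α = φ_F(v) ∈ ⟨F_J⟩`. Conversely, `φ_F` maps
`(𝓕_J) ∩ ⟨N(J)⟩` into `(F_J) ∩ ⟨N(J)⟩`, which vanishes for a marked basis.
-/

noncomputable section

namespace MarkedFamilies

open MvPolynomial

variable {n : ℕ}

section Decomposition

open Finsupp

lemma le_of_add_eq_of_toColex_le {α β δ δ' : Mon n} (h : δ' + α = δ + β)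
    (hαδ' : minGeMax α δ') (hle : toColex δ ≤ toColex δ') : α ≤ β := by
  rcases hle.eq_or_lt with heq | hlt
  · obtain rfl : δ = δ' := toColex_inj.1 heq
    exact (add_left_cancel h).le
  obtain ⟨i, hagree, hi⟩ := Colex.lt_iff.1 hlt
  simp only [ofColex_toColex] at hagree hi
  have hi' : i ∈ δ'.support := mem_support_iff.2 (by omega)
  intro k
  have hk := DFunLike.congr_fun h k
  simp only [Finsupp.coe_add, Pi.add_apply] at hk
  rcases lt_trichotomy k i with hki | rfl | hik
  · by_contra hαk
    exact (hαδ' k (mem_support_iff.2 (by omega)) i hi').not_gt hki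
  · omega
  · have := hagree k hik
    omega

lemma toColex_lt_of_add_eq {J : Set (Mon n)} (hJ : IsMonomialIdeal J) {α β δ δ' : Mon n}
    (h : δ' + α = δ + β) (hα : α ∈ J) (hαδ' : minGeMax α δ') (hβ : β ∉ J) :
    toColex δ' < toColex δ := by
  by_contra! hle
  have hαβ := le_of_add_eq_of_toColex_le h hαδ' hle
  exact hβ (add_tsub_cancel_of_le hαβ ▸ hJ α hα (β - α))

lemma sub_single_mem_of_notMem_minGens {J : Set (Mon n)} (hJ : IsStronglyStable J)
    {η : Mon n} (hη : η ∈ J) (hηB : η ∉ minGens J) {j : Fin (n + 1)} (hj : η j ≠ 0)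
    (hjmin : ∀ i, η i ≠ 0 → j ≤ i) : η - single j 1 ∈ J := by
  obtain ⟨i, hi, hiJ⟩ : ∃ i, η i ≠ 0 ∧ η - single i 1 ∈ J := by
    by_contra! h
    exact hηB ⟨hη, h⟩
  rcases (hjmin i hi).eq_or_lt with rfl | hji
  · exact hiJ
  -- `x^η / x_j = (x_i / x_j) · (x^η / x_i)`
  have hmove := hJ.2 _ hiJ j (by simp [hji.ne]; omega) i hji
  convert hmove using 1
  ext k
  simp only [Finsupp.coe_add, Finsupp.coe_tsub, Pi.add_apply, Pi.sub_apply, single_apply]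
  split_ifs <;> subst_vars <;> omega

lemma IsStronglyStable.exists_decomp {J : Set (Mon n)} (hJ : IsStronglyStable J)
    {η : Mon n} (hη : η ∈ J) :
    ∃ p : Mon n × Mon n, p.1 ∈ minGens J ∧ minGeMax p.1 p.2 ∧ p.1 + p.2 = η := by
  induction η using WellFoundedLT.induction with
  | _ η ih =>
  by_cases hηB : η ∈ minGens J
  · exact ⟨(η, 0), hηB, fun _ _ _ h => by simp at h, add_zero η⟩
  have hsupp : η.support.Nonempty := by
    rw [Finsupp.support_nonempty_iff]
    rintro rfl
    exact hηB ⟨hη, fun j hj => absurd rfl hj⟩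
  set j := η.support.min' hsupp
  have hjmin (i : Fin (n + 1)) (hi : η i ≠ 0) : j ≤ i :=
    η.support.min'_le i (mem_support_iff.2 hi)
  have hj : η j ≠ 0 := mem_support_iff.1 (η.support.min'_mem hsupp)
  have hjη : single j 1 ≤ η := single_le_iff.2 (Nat.one_le_iff_ne_zero.2 hj)
  have hpos : 0 < single j 1 := pos_iff_ne_zero.2 (single_ne_zero.2 one_ne_zero)
  obtain ⟨⟨α, δ⟩, hα, hαδ, hsum⟩ := ih (η - single j 1)
    ((lt_add_of_pos_right _ hpos).trans_eq (tsub_add_cancel_of_le hjη))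
    (sub_single_mem_of_notMem_minGens hJ hη hηB hj hjmin)
  refine ⟨(α, δ + single j 1), hα, fun i hi k hk => ?_, ?_⟩
  · rcases Finset.mem_union.1 (support_add hk) with hk | hk
    · exact hαδ i hi k hk
    · obtain rfl := Finset.mem_singleton.1 (support_single_subset hk)
      refine hjmin i fun hηi => mem_support_iff.1 hi ?_
      have := DFunLike.congr_fun hsum i
      simp [hηi] at this
      exact this.1
  · rw [← add_assoc, show α + δ = η - single j 1 from hsum, tsub_add_cancel_of_le hjη]

/-- The factorization `x^η = x^α · x^δ` of `IsStronglyStable.exists_decomp`, as the pair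
`(α, δ)`; junk for `η ∉ J`. -/
def ekDecomp (J : Set (Mon n)) (η : Mon n) : Mon n × Mon n :=
  Classical.epsilon fun p => p.1 ∈ minGens J ∧ minGeMax p.1 p.2 ∧ p.1 + p.2 = η

lemma ekDecomp_spec {J : Set (Mon n)} (hJ : IsStronglyStable J) {η : Mon n} (hη : η ∈ J) :
    (ekDecomp J η).1 ∈ minGens J ∧ minGeMax (ekDecomp J η).1 (ekDecomp J η).2 ∧
      (ekDecomp J η).1 + (ekDecomp J η).2 = η :=
  Classical.epsilon_spec (hJ.exists_decomp hη)

end Decomposition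

section Triangular

variable {A : Type*} [CommRing A] {J : Set (Mon n)}

lemma nSpan_eq_restrictSupport (J : Set (Mon n)) : nSpan A J = restrictSupport A Jᶜ := by
  rw [restrictSupport_eq_span, nSpan]
  congr 1
  ext p
  simp [eq_comm]

lemma mem_nSpan_iff {p : MvPolynomial (Fin (n + 1)) A} :
    p ∈ nSpan A J ↔ ∀ γ ∈ J, p.coeff γ = 0 := by
  rw [nSpan_eq_restrictSupport, mem_restrictSupport_iff]
  exact ⟨fun h γ hγ => notMem_support_iff.1 fun hs => h hs hγ,
    fun h γ hs hγ => mem_support_iff.1 hs (h γ hγ)⟩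

lemma mem_span_monomial_support {σ R : Type*} [CommSemiring R] (p : MvPolynomial σ R) :
    p ∈ Submodule.span R ((monomial · 1) '' ↑p.support) := by
  rw [← restrictSupport_eq_span]
  exact (mem_restrictSupport_iff R).2 subset_rfl

variable {β : Type*} [LinearOrder β] {g : Mon n → MvPolynomial (Fin (n + 1)) A} {key : Mon n → β}

lemma codisjoint_span_nSpan_of_triangular [WellFoundedLT β]
    (hdiag : ∀ η ∈ J, (g η).coeff η = 1)
    (htri : ∀ η ∈ J, ∀ γ ∈ J, γ ≠ η → (g η).coeff γ ≠ 0 → key γ < key η) :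
    Codisjoint (Submodule.span A (g '' J)) (nSpan A J) := by
  set V := Submodule.span A (g '' J) ⊔ nSpan A J
  suffices hmon : ∀ η, monomial η (1 : A) ∈ V by
    rw [codisjoint_iff, eq_top_iff]
    intro p _
    exact Submodule.span_le.2 (by rintro _ ⟨η, -, rfl⟩; exact hmon η)
      (mem_span_monomial_support p)
  intro η
  induction η using (InvImage.wf key wellFounded_lt).induction with
  | _ η ih =>
  by_cases hη : η ∈ J
  swap
  · exact Submodule.mem_sup_right (Submodule.subset_span ⟨η, hη, rfl⟩)
  have hrest : g η - monomial η 1 ∈ V := by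
    refine Submodule.span_le.2 ?_ (mem_span_monomial_support _)
    rintro _ ⟨γ, hγ, rfl⟩
    have hγη : γ ≠ η := by
      rintro rfl
      simp [hdiag γ hη] at hγ
    have hcγ : (g η).coeff γ ≠ 0 := by simpa [coeff_monomial, hγη.symm] using hγ
    by_cases hγJ : γ ∈ J
    · exact ih γ (htri η hη γ hγJ hγη hcγ)
    · exact Submodule.mem_sup_right (Submodule.subset_span ⟨γ, hγJ, rfl⟩)
  have hg : g η ∈ V := Submodule.mem_sup_left (Submodule.subset_span ⟨η, hη, rfl⟩)
  simpa using Submodule.sub_mem _ hg hrest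

lemma disjoint_span_nSpan_of_triangular (hdiag : ∀ η ∈ J, (g η).coeff η = 1)
    (htri : ∀ η ∈ J, ∀ γ ∈ J, γ ≠ η → (g η).coeff γ ≠ 0 → key γ < key η) :
    Disjoint (Submodule.span A (g '' J)) (nSpan A J) := by
  rw [Submodule.disjoint_def]
  intro p hpV hpN
  obtain ⟨l, hlJ, rfl⟩ := (Finsupp.mem_span_image_iff_linearCombination A).1 hpV
  by_contra hp
  have hl : l.support.Nonempty := by
    rw [Finsupp.support_nonempty_iff]
    rintro rfl
    simp at hp
  -- no other term of the combination reaches the monomial with the largest key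
  obtain ⟨η, hηl, hηmax⟩ := l.support.exists_max_image key hl
  have hηJ : η ∈ J := hlJ hηl
  have hcoeff : (Finsupp.linearCombination A g l).coeff η = l η := by
    rw [Finsupp.linearCombination_apply, Finsupp.sum, coeff_sum, Finset.sum_eq_single η]
    · simp [hdiag η hηJ]
    · intro γ hγl hγη
      rw [coeff_smul, smul_eq_mul, mul_eq_zero_of_right]
      by_contra hc
      exact (htri γ (hlJ hγl) η hηJ hγη.symm hc).not_ge (hηmax γ hγl)
    · exact fun h => absurd hηl h
  exact Finsupp.mem_support_iff.1 hηl (hcoeff.symm.trans (mem_nSpan_iff.1 hpN η hηJ))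

end Triangular

section Multiples

variable {A : Type*} [CommRing A]

def ekMultiple (J : Set (Mon n)) (F : Mon n → MvPolynomial (Fin (n + 1)) A) (η : Mon n) :
    MvPolynomial (Fin (n + 1)) A :=
  monomial (ekDecomp J η).2 1 * F (ekDecomp J η).1

/-- The module `⟨F_J⟩ = ⊕_s ⟨F_J^{(s)}⟩` of the paper. -/
def ekSpan (A : Type*) [CommRing A] (J : Set (Mon n))
    (F : Mon n → MvPolynomial (Fin (n + 1)) A) : Submodule A (MvPolynomial (Fin (n + 1)) A) :=
  Submodule.span A (ekMultiple J F '' J)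

variable {J : Set (Mon n)} {F : Mon n → MvPolynomial (Fin (n + 1)) A}

lemma coeff_ekMultiple (J : Set (Mon n)) (F : Mon n → MvPolynomial (Fin (n + 1)) A)
    (η γ : Mon n) :
    (ekMultiple J F η).coeff γ =
      if (ekDecomp J η).2 ≤ γ then (F (ekDecomp J η).1).coeff (γ - (ekDecomp J η).2) else 0 := by
  rw [ekMultiple, coeff_monomial_mul', one_mul]

lemma coeff_ekMultiple_self (hJ : IsStronglyStable J) (hF : IsMarkedSet J F) {η : Mon n}
    (hη : η ∈ J) : (ekMultiple J F η).coeff η = 1 := by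
  obtain ⟨hα, -, hsum⟩ := ekDecomp_spec hJ hη
  rw [coeff_ekMultiple, if_pos (le_add_self.trans_eq hsum), ← eq_tsub_of_add_eq hsum]
  exact (hF _ hα).1

lemma toColex_lt_of_coeff_ekMultiple_ne_zero (hJ : IsStronglyStable J) (hF : IsMarkedSet J F)
    {η γ : Mon n} (hη : η ∈ J) (hγ : γ ∈ J) (hγη : γ ≠ η)
    (hc : (ekMultiple J F η).coeff γ ≠ 0) :
    toColex (ekDecomp J γ).2 < toColex (ekDecomp J η).2 := by
  obtain ⟨hα, -, hsum⟩ := ekDecomp_spec hJ hη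
  obtain ⟨hα', hαδ', hsum'⟩ := ekDecomp_spec hJ hγ
  set δ := (ekDecomp J η).2
  rw [coeff_ekMultiple] at hc
  split_ifs at hc with hδγ
  swap
  · exact absurd rfl hc
  have hβα : γ - δ ≠ (ekDecomp J η).1 := by
    rintro hβ
    rw [← hsum, ← hβ, tsub_add_cancel_of_le hδγ] at hγη
    exact hγη rfl
  refine toColex_lt_of_add_eq hJ.1 ?_ hα'.1 hαδ' ((hF _ hα).2 _ (mem_support_iff.2 hc) hβα).1
  rw [add_comm, hsum', add_tsub_cancel_of_le hδγ]

lemma isCompl_ekSpan_nSpan (hJ : IsStronglyStable J) (hF : IsMarkedSet J F) :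
    IsCompl (ekSpan A J F) (nSpan A J) :=
  have hdiag := fun _ hη => coeff_ekMultiple_self hJ hF hη
  have htri := fun _ hη _ hγ hγη hc => toColex_lt_of_coeff_ekMultiple_ne_zero hJ hF hη hγ hγη hc
  ⟨disjoint_span_nSpan_of_triangular hdiag htri, codisjoint_span_nSpan_of_triangular hdiag htri⟩

lemma ekSpan_le_markedIdeal (hJ : IsStronglyStable J) :
    ekSpan A J F ≤ (markedIdeal J F).restrictScalars A :=
  Submodule.span_le.2 <| by
    rintro _ ⟨η, hη, rfl⟩
    exact Ideal.mul_mem_left _ _ (Ideal.subset_span ⟨_, (ekDecomp_spec hJ hη).1, rfl⟩)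

lemma isMarkedBasis_iff_disjoint (hJ : IsStronglyStable J) (hF : IsMarkedSet J F) :
    IsMarkedBasis J F ↔ Disjoint ((markedIdeal J F).restrictScalars A) (nSpan A J) :=
  ⟨fun h => h.2.disjoint, fun h => ⟨hF, h,
    (isCompl_ekSpan_nSpan hJ hF).codisjoint.mono_left (ekSpan_le_markedIdeal hJ)⟩⟩

end Multiples

lemma map_mem_nSpan {R S : Type*} [CommRing R] [CommRing S] (f : R →+* S) {J : Set (Mon n)}
    {p : MvPolynomial (Fin (n + 1)) R} (hp : p ∈ nSpan R J) : map f p ∈ nSpan S J :=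
  mem_nSpan_iff.2 fun γ hγ => by rw [coeff_map, mem_nSpan_iff.1 hp γ hγ, map_zero]

lemma markedCoeffIdeal_le_ker_iff {A : Type*} [CommRing A] {J : Set (Mon n)}
    (𝓕 : Mon n → MvPolynomial (Fin (n + 1)) (ZC J)) (f : ZC J →+* A) :
    markedCoeffIdeal J 𝓕 ≤ RingHom.ker f ↔
      ∀ p ∈ markedIdeal J 𝓕, p ∈ nSpan (ZC J) J → map f p = 0 := by
  rw [markedCoeffIdeal, Ideal.span_le]
  constructor
  · intro h p hpI hpN
    ext γ
    rw [coeff_map, coeff_zero, ← RingHom.mem_ker]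
    exact h ⟨p, hpI, hpN, γ, rfl⟩
  · rintro h _ ⟨p, hpI, hpN, γ, rfl⟩
    rw [SetLike.mem_coe, RingHom.mem_ker, ← coeff_map, h p hpI hpN, coeff_zero]

section Generic

variable {A : Type*} [CommRing A] {J : Set (Mon n)}
  {𝓕 : Mon n → MvPolynomial (Fin (n + 1)) (ZC J)} {F : Mon n → MvPolynomial (Fin (n + 1)) A}

lemma IsGenericMarkedSet.isMarkedSet (h𝓕 : IsGenericMarkedSet J 𝓕) : IsMarkedSet J 𝓕 :=
  fun α hα => ⟨(h𝓕 α hα).1, fun _ hβ hβα => not_not.1 fun hc =>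
    mem_support_iff.1 hβ ((h𝓕 α hα).2.2 _ hβα hc)⟩

lemma map_evalHom_generic (h𝓕 : IsGenericMarkedSet J 𝓕) (hF : IsMarkedSet J F) {α : Mon n}
    (hα : α ∈ minGens J) : map (evalHom J F) (𝓕 α) = F α := by
  obtain ⟨h𝓕α, h𝓕N, h𝓕0⟩ := h𝓕 α hα
  ext γ
  rw [coeff_map]
  rcases eq_or_ne γ α with rfl | hγα
  · rw [h𝓕α, (hF γ hα).1, map_one]
  by_cases hγ : γ ∉ J ∧ mdeg γ = mdeg α
  · simp [h𝓕N γ hγ, evalHom]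
  · rw [h𝓕0 γ hγα hγ, map_zero, eq_comm, ← notMem_support_iff]
    exact fun hs => hγ ((hF α hα).2 γ hs hγα)

lemma map_mem_markedIdeal (h𝓕 : IsGenericMarkedSet J 𝓕) (hF : IsMarkedSet J F)
    {p : MvPolynomial (Fin (n + 1)) (ZC J)} (hp : p ∈ markedIdeal J 𝓕) :
    map (evalHom J F) p ∈ markedIdeal J F := by
  have := Ideal.mem_map_of_mem (map (evalHom J F)) hp
  rwa [markedIdeal, Ideal.map_span, Set.image_image,
    Set.image_congr fun α hα => map_evalHom_generic h𝓕 hF hα] at this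

lemma map_mem_ekSpan (hJ : IsStronglyStable J) (h𝓕 : IsGenericMarkedSet J 𝓕)
    (hF : IsMarkedSet J F) {v : MvPolynomial (Fin (n + 1)) (ZC J)} (hv : v ∈ ekSpan (ZC J) J 𝓕) :
    map (evalHom J F) v ∈ ekSpan A J F := by
  induction hv using Submodule.span_induction with
  | mem _ h =>
    obtain ⟨η, hη, rfl⟩ := h
    rw [ekMultiple, map_mul, map_monomial, map_one,
      map_evalHom_generic h𝓕 hF (ekDecomp_spec hJ hη).1]
    exact Submodule.subset_span ⟨η, hη, rfl⟩
  | zero => simp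
  | add _ _ _ _ hx hy => simpa using add_mem hx hy
  | smul c _ _ hx =>
    rw [smul_eq_C_mul, map_mul, map_C, ← smul_eq_C_mul]
    exact Submodule.smul_mem _ _ hx

lemma map_mem_ekSpan_of_mem_markedIdeal (hJ : IsStronglyStable J) (h𝓕 : IsGenericMarkedSet J 𝓕)
    (hF : IsMarkedSet J F)
    (hker : ∀ p ∈ markedIdeal J 𝓕, p ∈ nSpan (ZC J) J → map (evalHom J F) p = 0)
    {p : MvPolynomial (Fin (n + 1)) (ZC J)} (hp : p ∈ markedIdeal J 𝓕) :
    map (evalHom J F) p ∈ ekSpan A J F := by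
  have hsup := (isCompl_ekSpan_nSpan hJ h𝓕.isMarkedSet).sup_eq_top
  obtain ⟨v, hv, r, hr, rfl⟩ := Submodule.mem_sup.1 (hsup ▸ Submodule.mem_top (x := p))
  have hrI : r ∈ markedIdeal J 𝓕 := by
    simpa using Ideal.sub_mem _ hp (ekSpan_le_markedIdeal hJ hv)
  rw [map_add, hker r hrI hr, add_zero]
  exact map_mem_ekSpan hJ h𝓕 hF hv

lemma markedIdeal_le_ekSpan (hJ : IsStronglyStable J) (h𝓕 : IsGenericMarkedSet J 𝓕)
    (hF : IsMarkedSet J F)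
    (hker : ∀ p ∈ markedIdeal J 𝓕, p ∈ nSpan (ZC J) J → map (evalHom J F) p = 0) :
    (markedIdeal J F).restrictScalars A ≤ ekSpan A J F := by
  have hmon : Submodule.span A (Set.range fun γ : Mon n => monomial γ (1 : A)) = ⊤ := by
    rw [← coe_basisMonomials, Module.Basis.span_eq]
  rw [markedIdeal, Ideal.span, ← Submodule.span_smul_of_span_eq_top hmon, Submodule.span_le]
  rintro _ ⟨_, ⟨γ, rfl⟩, _, ⟨α, hα, rfl⟩, rfl⟩
  change monomial γ 1 * F α ∈ ekSpan A J F
  rw [← map_evalHom_generic h𝓕 hF hα, ← map_one (evalHom J F), ← map_monomial, ← map_mul]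
  exact map_mem_ekSpan_of_mem_markedIdeal hJ h𝓕 hF hker
    (Ideal.mul_mem_left _ _ (Ideal.subset_span ⟨α, hα, rfl⟩))

end Generic

end MarkedFamilies

end

open MarkedFamilies in
theorem stmt_13_general {n : ℕ} (J : Set (Mon n)) (hJ : IsStronglyStable J)
    (𝓕 : Mon n → MvPolynomial (Fin (n + 1)) (ZC J)) (h𝓕 : IsGenericMarkedSet J 𝓕)
    {A : Type*} [CommRing A]
    (F : Mon n → MvPolynomial (Fin (n + 1)) A) (hF : IsMarkedSet J F) :
    IsMarkedBasis J F ↔ markedCoeffIdeal J 𝓕 ≤ RingHom.ker (evalHom J F) := by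
  rw [isMarkedBasis_iff_disjoint hJ hF, markedCoeffIdeal_le_ker_iff]
  constructor
  · intro hdisj p hpI hpN
    exact Submodule.disjoint_def.1 hdisj _ (map_mem_markedIdeal h𝓕 hF hpI) (map_mem_nSpan _ hpN)
  · intro hker
    exact (isCompl_ekSpan_nSpan hJ hF).disjoint.mono_left (markedIdeal_le_ekSpan hJ h𝓕 hF hker)

open MarkedFamilies in
/-- a `J`-marked set is a `J`-marked basis iff its evaluation
homomorphism `φ_{F_J} : ℤ[C] → A` kills the ideal `𝔦_J`. -/
theorem stmt_13 {n : ℕ} (J : Set (Mon n)) (hJ : IsStronglyStable J)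
    (𝓕 : Mon n → MvPolynomial (Fin (n + 1)) (ZC J)) (h𝓕 : IsGenericMarkedSet J 𝓕)
    {A : Type*} [CommRing A] [IsNoetherianRing A]
    (F : Mon n → MvPolynomial (Fin (n + 1)) A) (hF : IsMarkedSet J F) :
    IsMarkedBasis J F ↔ markedCoeffIdeal J 𝓕 ≤ RingHom.ker (evalHom J F) :=
  stmt_13_general J hJ 𝓕 h𝓕 F hF
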